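/- Let X ∈ ℝ^{N×I} have rank R and M be an uncentered whitening matrix for X. Then for any W ∈ ℝ^{I×O} and rank bound P, ‖XW − T_P(XW)‖_F = ‖XW − X M T_P(M⁺ W)‖_F, where T_P denotes best rank-P SVD truncation; i.e., the activation-aware factorization achieves the Eckart–Young–Mirsky optimal output distortion. -/

import Mathlib

open Matrix

/-- Squared Frobenius norm of a matrix. -/
def frobSq {m n : Type*} [Fintype m] [Fintype n] (A : Matrix m n ℝ) : ℝ :=
  ∑ i, ∑ j, (A i j) ^ 2

/-- Frobenius norm of a matrix. -/
noncomputable def frobNorm {m n : Type*} [Fintype m] [Fintype n] (A : Matrix m n ℝ) : ℝ :=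
  Real.sqrt (frobSq A)

/-- `Ī_R`: the `I×I` matrix equal to the identity on the first `R` coordinates and zero
elsewhere. -/
def Ibar (I R : ℕ) : Matrix (Fin I) (Fin I) ℝ :=
  Matrix.of fun i j => if i = j ∧ (i : ℕ) < R then (1 : ℝ) else 0

/-- `Mp` is the Moore–Penrose pseudoinverse of `M` (the four Penrose conditions). -/
def IsMoorePenrose {I : ℕ} (M Mp : Matrix (Fin I) (Fin I) ℝ) : Prop :=
  M * Mp * M = M ∧ Mp * M * Mp = Mp ∧ (M * Mp)ᵀ = M * Mp ∧ (Mp * M)ᵀ = Mp * M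

/-- Rectangular "diagonal" matrix with entries `s 0, s 1, …` on the main diagonal. -/
def rectDiag (I O : ℕ) (s : ℕ → ℝ) : Matrix (Fin I) (Fin O) ℝ :=
  Matrix.of fun i j => if (i : ℕ) = (j : ℕ) then s (i : ℕ) else 0

/-!
Because `range M = row X`, the Penrose equations give `X M M⁺ = X`; and since the Gram matrix of
`X M` is `N Ī_R`, the columns of `M` past `R` vanish, so `Ī_R M⁺ = M⁺`. Hence `X M` multiplies
Gram matrices of matrices `M⁺ C` by `N`. Applied to `C = W`, this shows that the squared singular
values of `X W` are `N` times those of `M⁺ W` (both sorted lists are the eigenvalues of the same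
Gram matrix, so they agree, as is seen on characteristic polynomials). Applied to
`M⁺ W - T_P(M⁺ W) = M⁺ W Q` with `Q` a projection on the trailing right singular vectors, it shows
that the residual `X W - X M T_P(M⁺ W) = X M (M⁺ W - T_P(M⁺ W))` has squared norm `N` times the
tail of the squared singular values of `M⁺ W`, which is the tail of those of `X W`.
-/

section Frobenius

variable {m n p : Type*} [Fintype m] [Fintype n] [Fintype p]

lemma frobSq_eq_trace (A : Matrix m n ℝ) : frobSq A = (Aᵀ * A).trace := by
  simp only [frobSq, trace, diag, mul_apply, transpose_apply, sq]
  exact Finset.sum_comm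

lemma frobSq_eq_mul_of_transpose_mul_self_eq {A : Matrix m n ℝ} {B : Matrix p n ℝ} {c : ℝ}
    (h : Aᵀ * A = c • (Bᵀ * B)) : frobSq A = c * frobSq B := by
  rw [frobSq_eq_trace, frobSq_eq_trace, h, trace_smul, smul_eq_mul]

lemma frobSq_mul_transpose_of_orthonormal [DecidableEq n] (A : Matrix m n ℝ)
    {V : Matrix p n ℝ} (hV : Vᵀ * V = 1) : frobSq (A * Vᵀ) = frobSq A := by
  rw [frobSq_eq_trace, frobSq_eq_trace, transpose_mul, transpose_transpose, Matrix.mul_assoc,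
    trace_mul_comm, Matrix.mul_assoc, Matrix.mul_assoc, hV, Matrix.mul_one]

lemma frobSq_orthonormal_mul [DecidableEq m] {U : Matrix p m ℝ} (hU : Uᵀ * U = 1)
    (A : Matrix m n ℝ) : frobSq (U * A) = frobSq A := by
  rw [frobSq_eq_trace, frobSq_eq_trace, transpose_mul, Matrix.mul_assoc, ← Matrix.mul_assoc Uᵀ, hU,
    Matrix.one_mul]

end Frobenius

section RectDiag

variable {m n : ℕ}

/-- The squared singular values of `rectDiag m n s`, padded with zeros to length `n`. -/
def rectDiagSq (m n : ℕ) (s : ℕ → ℝ) : Fin n → ℝ :=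
  fun j => if (j : ℕ) < m then s j ^ 2 else 0

lemma rectDiag_transpose_mul_self (s : ℕ → ℝ) :
    (rectDiag m n s)ᵀ * rectDiag m n s = diagonal (rectDiagSq m n s) := by
  ext j k
  simp only [mul_apply, transpose_apply, rectDiag, of_apply, diagonal_apply, rectDiagSq]
  by_cases hjk : j = k
  · subst hjk
    rw [if_pos rfl]
    split_ifs with hj
    · rw [Finset.sum_eq_single ⟨j, hj⟩ (fun i _ hi => by simp [Fin.ext_iff] at hi; simp [hi])
        (by simp)]
      simp [sq]
    · exact Finset.sum_eq_zero fun i _ => by simp [show (i : ℕ) ≠ j by omega]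
  · rw [if_neg hjk]
    refine Finset.sum_eq_zero fun i _ => ?_
    split_ifs with h₁ h₂ <;> simp_all [Fin.ext_iff]

lemma frobSq_rectDiag (s : ℕ → ℝ) : frobSq (rectDiag m n s) = ∑ j, rectDiagSq m n s j := by
  rw [frobSq_eq_trace, rectDiag_transpose_mul_self, trace_diagonal]

lemma rectDiagSq_antitone {s : ℕ → ℝ} (hs₀ : ∀ i, 0 ≤ s i) (hs : Antitone s) :
    Antitone (rectDiagSq m n s) := by
  intro i j hij
  simp only [rectDiagSq]
  split_ifs with hj hi hi
  · exact pow_le_pow_left₀ (hs₀ _) (hs hij) 2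
  · omega
  · positivity
  · rfl

lemma rectDiag_mul_diagonal (s d : ℕ → ℝ) :
    rectDiag m n s * diagonal (fun j : Fin n => d j) = rectDiag m n (fun i => s i * d i) := by
  ext i j
  simp only [mul_diagonal, rectDiag, of_apply]
  split_ifs with h <;> simp [h]

end RectDiag

section SVD

variable {k l : Type*} {m n : ℕ}
  {U : Matrix k (Fin m) ℝ} {V : Matrix l (Fin n) ℝ} (s : ℕ → ℝ)

lemma svd_transpose_mul_self [Fintype k] (hU : Uᵀ * U = 1) :
    (U * rectDiag m n s * Vᵀ)ᵀ * (U * rectDiag m n s * Vᵀ)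
      = V * diagonal (rectDiagSq m n s) * Vᵀ := by
  rw [← rectDiag_transpose_mul_self]
  simp only [transpose_mul, transpose_transpose, Matrix.mul_assoc]
  rw [← Matrix.mul_assoc Uᵀ, hU, Matrix.one_mul]

lemma svd_sub_truncate [Fintype k] (P : ℕ) :
    U * rectDiag m n s * Vᵀ - U * rectDiag m n (fun i => if i < P then s i else 0) * Vᵀ
      = U * rectDiag m n (fun i => if i < P then 0 else s i) * Vᵀ := by
  rw [← Matrix.sub_mul, ← Matrix.mul_sub]
  congr 2
  ext i j
  simp only [Matrix.sub_apply, rectDiag, of_apply]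
  split_ifs <;> simp

lemma svd_sub_truncate_eq_mul [Fintype k] [Fintype l] (hV : Vᵀ * V = 1) (P : ℕ) :
    U * rectDiag m n s * Vᵀ - U * rectDiag m n (fun i => if i < P then s i else 0) * Vᵀ
      = U * rectDiag m n s * Vᵀ
        * (V * diagonal (fun j : Fin n => if (j : ℕ) < P then (0 : ℝ) else 1) * Vᵀ) := by
  have hd : rectDiag m n (fun i => if i < P then 0 else s i)
      = rectDiag m n s * diagonal (fun j : Fin n => if (j : ℕ) < P then (0 : ℝ) else 1) := by
    rw [rectDiag_mul_diagonal s fun i => if i < P then 0 else 1]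
    simp only [mul_ite, mul_zero, mul_one]
  rw [svd_sub_truncate, hd]
  simp only [Matrix.mul_assoc]
  rw [← Matrix.mul_assoc Vᵀ V, hV, Matrix.one_mul]

lemma frobSq_svd_sub_truncate [Fintype k] [Fintype l] (hU : Uᵀ * U = 1) (hV : Vᵀ * V = 1)
    (P : ℕ) :
    frobSq (U * rectDiag m n s * Vᵀ - U * rectDiag m n (fun i => if i < P then s i else 0) * Vᵀ)
      = ∑ j : Fin n, if P ≤ (j : ℕ) then rectDiagSq m n s j else 0 := by
  rw [svd_sub_truncate, frobSq_mul_transpose_of_orthonormal _ hV, frobSq_orthonormal_mul hU,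
    frobSq_rectDiag]
  refine Finset.sum_congr rfl fun j _ => ?_
  by_cases hP : (j : ℕ) < P
  · simp [rectDiagSq, hP]
  · simp [rectDiagSq, hP, le_of_not_gt hP]

end SVD

section Spectrum

open Polynomial in
lemma eq_of_charpoly_diagonal_eq {n : ℕ} {f g : Fin n → ℝ} (hf : Antitone f) (hg : Antitone g)
    (h : (diagonal f).charpoly = (diagonal g).charpoly) : f = g := by
  have hroots : ∀ d : Fin n → ℝ, (diagonal d).charpoly.roots = Finset.univ.val.map d := by
    intro d
    rw [charpoly_diagonal, Finset.prod_eq_multiset_prod]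
    simpa [Multiset.map_map, Function.comp_def] using
      roots_multiset_prod_X_sub_C (Finset.univ.val.map d)
  replace h := congrArg roots h
  rw [hroots, hroots, Fin.univ_val_map, Fin.univ_val_map, Multiset.coe_eq_coe] at h
  exact List.ofFn_injective (h.eq_of_sortedGE hf.sortedGE_ofFn hg.sortedGE_ofFn)

lemma eq_of_conj_diagonal_eq {n : ℕ} {f g : Fin n → ℝ} (hf : Antitone f) (hg : Antitone g)
    {V₁ V₂ : Matrix (Fin n) (Fin n) ℝ} (hV₁ : V₁ᵀ * V₁ = 1) (hV₂ : V₂ᵀ * V₂ = 1)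
    (h : V₁ * diagonal f * V₁ᵀ = V₂ * diagonal g * V₂ᵀ) : f = g := by
  refine eq_of_charpoly_diagonal_eq hf hg ?_
  have hconj : ∀ {d : Fin n → ℝ} {V : Matrix (Fin n) (Fin n) ℝ}, Vᵀ * V = 1 →
      (V * diagonal d * Vᵀ).charpoly = (diagonal d).charpoly := fun hV => by
    rw [charpoly_mul_comm, ← Matrix.mul_assoc, hV, Matrix.one_mul]
  rw [← hconj hV₁, h, hconj hV₂]

end Spectrum

section Whitening

variable {m n k : Type*}

lemma mul_mul_pinv_eq_self [Fintype m] [Fintype n] [Fintype k] [DecidableEq m] {R : Type*}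
    [CommRing R] {X : Matrix m n R} {M : Matrix n k R} {Mp : Matrix k n R}
    (hrange : LinearMap.range Xᵀ.mulVecLin ≤ LinearMap.range M.mulVecLin)
    (h₁ : M * Mp * M = M) (h₃ : (M * Mp)ᵀ = M * Mp) : X * M * Mp = X := by
  have hproj : M * Mp * Xᵀ = Xᵀ := by
    refine ext_of_mulVec_single fun i => ?_
    obtain ⟨u, hu⟩ := hrange ⟨Pi.single i 1, rfl⟩
    simp only [mulVecLin_apply] at hu
    rw [← mulVec_mulVec, ← hu, mulVec_mulVec, h₁]
  rw [Matrix.mul_assoc, ← h₃, ← transpose_transpose X, ← transpose_mul, hproj]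

lemma eq_zero_of_mul_eq_zero_of_range_le [Fintype m] [Fintype n] [Fintype k]
    {X : Matrix m n ℝ} {A : Matrix n k ℝ}
    (hrange : LinearMap.range A.mulVecLin ≤ LinearMap.range Xᵀ.mulVecLin) (hXA : X * A = 0) :
    A = 0 := by
  classical
  have hAv : ∀ v, A *ᵥ v = 0 := by
    intro v
    obtain ⟨u, hu⟩ := hrange ⟨v, rfl⟩
    simp only [mulVecLin_apply] at hu
    have hXAv : X *ᵥ (A *ᵥ v) = 0 := by rw [mulVec_mulVec, hXA, zero_mulVec]
    have hself : (A *ᵥ v) ⬝ᵥ (A *ᵥ v) = 0 := by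
      nth_rw 2 [← hu]
      rw [dotProduct_mulVec, vecMul_transpose, hXAv, zero_dotProduct]
    exact dotProduct_self_eq_zero.mp hself
  exact ext_of_mulVec_single fun i => by rw [hAv, zero_mulVec]

lemma Ibar_eq_diagonal (I R : ℕ) :
    Ibar I R = diagonal fun i : Fin I => if (i : ℕ) < R then 1 else 0 := by
  ext i j
  by_cases h : i = j <;> simp [Ibar, h]

lemma transpose_Ibar (I R : ℕ) : (Ibar I R)ᵀ = Ibar I R := by
  rw [Ibar_eq_diagonal, diagonal_transpose]

lemma Ibar_mul_self (I R : ℕ) : Ibar I R * Ibar I R = Ibar I R := by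
  rw [Ibar_eq_diagonal, diagonal_mul_diagonal]
  congr 1
  ext i
  split_ifs <;> norm_num

/-- The columns of `M` past `R` are killed by `X` (they have zero Gram diagonal) yet lie in the row
space of `X`, so they vanish. -/
lemma mul_Ibar_eq_self {N I R : ℕ} {X : Matrix (Fin N) (Fin I) ℝ} {M : Matrix (Fin I) (Fin I) ℝ}
    {c : ℝ} (hW : Mᵀ * (Xᵀ * X) * M = c • Ibar I R)
    (hrange : LinearMap.range M.mulVecLin ≤ LinearMap.range Xᵀ.mulVecLin) :
    M * Ibar I R = M := by
  set J := Ibar I R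
  have hgram : (X * (M * (1 - J)))ᵀ * (X * (M * (1 - J))) = 0 := by
    have hJ : J * (1 - J) = 0 := by rw [Matrix.mul_sub, Matrix.mul_one, Ibar_mul_self, sub_self]
    rw [show (X * (M * (1 - J)))ᵀ * (X * (M * (1 - J))) = (1 - J)ᵀ * (Mᵀ * (Xᵀ * X) * M) * (1 - J)
      by simp only [transpose_mul, Matrix.mul_assoc], hW, Matrix.mul_smul, Matrix.smul_mul,
      Matrix.mul_assoc, hJ, Matrix.mul_zero, smul_zero]
  have hzero : M * (1 - J) = 0 := by
    refine eq_zero_of_mul_eq_zero_of_range_le (le_trans ?_ hrange)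
      (conjTranspose_mul_self_eq_zero.mp hgram)
    rw [mulVecLin_mul]
    exact LinearMap.range_comp_le_range _ _
  rwa [Matrix.mul_sub, Matrix.mul_one, sub_eq_zero, eq_comm] at hzero

lemma mul_pinv_eq_self_of_mul_eq_self [Fintype n] {R : Type*} [CommRing R]
    {M Mp J : Matrix n n R}
    (hJ : Jᵀ = J) (hMJ : M * J = M) (h₂ : Mp * M * Mp = Mp) (h₄ : (Mp * M)ᵀ = Mp * M) :
    J * Mp = Mp := by
  have hJMt : J * Mᵀ = Mᵀ := by rw [← hJ, ← transpose_mul, hMJ]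
  calc J * Mp = J * (Mp * M)ᵀ * Mp := by rw [h₄, Matrix.mul_assoc, h₂]
    _ = Mp := by rw [transpose_mul, ← Matrix.mul_assoc, hJMt, ← transpose_mul, h₄, h₂]

lemma whitening_transpose_mul_self {N I R : ℕ} {X : Matrix (Fin N) (Fin I) ℝ}
    {M Mp : Matrix (Fin I) (Fin I) ℝ} (hW : Mᵀ * (Xᵀ * X) * M = (N : ℝ) • Ibar I R)
    (hrange : LinearMap.range M.mulVecLin ≤ LinearMap.range Xᵀ.mulVecLin)
    (hMp : IsMoorePenrose M Mp) (C : Matrix (Fin I) k ℝ) :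
    (X * M * (Mp * C))ᵀ * (X * M * (Mp * C)) = (N : ℝ) • ((Mp * C)ᵀ * (Mp * C)) := by
  have hJMp : Ibar I R * Mp = Mp := mul_pinv_eq_self_of_mul_eq_self (transpose_Ibar I R)
    (mul_Ibar_eq_self hW hrange) hMp.2.1 hMp.2.2.2
  rw [show (X * M * (Mp * C))ᵀ * (X * M * (Mp * C)) = (Mp * C)ᵀ * (Mᵀ * (Xᵀ * X) * M) * (Mp * C)
    by simp only [transpose_mul, Matrix.mul_assoc], hW, Matrix.mul_smul, Matrix.smul_mul,
    Matrix.mul_assoc, ← Matrix.mul_assoc (Ibar I R), hJMp]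

end Whitening

theorem activation_aware_factorization_optimal_general {N I O R : ℕ}
    (X : Matrix (Fin N) (Fin I) ℝ)
    (M Mp : Matrix (Fin I) (Fin I) ℝ)
    (hW : Mᵀ * (Xᵀ * X) * M = (N : ℝ) • Ibar I R)
    (hrange : LinearMap.range M.mulVecLin = LinearMap.range Xᵀ.mulVecLin)
    (hMp : IsMoorePenrose M Mp)
    (W : Matrix (Fin I) (Fin O) ℝ)
    -- an SVD `X * W = U₁ Σ₁ V₁ᵀ` with nonincreasing nonnegative singular values `s₁`
    (U₁ : Matrix (Fin N) (Fin N) ℝ) (V₁ : Matrix (Fin O) (Fin O) ℝ) (s₁ : ℕ → ℝ)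
    (hU₁ : U₁ᵀ * U₁ = 1) (hV₁ : V₁ᵀ * V₁ = 1)
    (hs₁0 : ∀ i, 0 ≤ s₁ i) (hs₁mono : ∀ i j : ℕ, i ≤ j → s₁ j ≤ s₁ i)
    (hSVD₁ : X * W = U₁ * rectDiag N O s₁ * V₁ᵀ)
    -- an SVD `Mp * W = U₂ Σ₂ V₂ᵀ` with nonincreasing nonnegative singular values `s₂`
    (U₂ : Matrix (Fin I) (Fin I) ℝ) (V₂ : Matrix (Fin O) (Fin O) ℝ) (s₂ : ℕ → ℝ)
    (hU₂ : U₂ᵀ * U₂ = 1) (hV₂ : V₂ᵀ * V₂ = 1)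
    (hs₂0 : ∀ i, 0 ≤ s₂ i) (hs₂mono : ∀ i j : ℕ, i ≤ j → s₂ j ≤ s₂ i)
    (hSVD₂ : Mp * W = U₂ * rectDiag I O s₂ * V₂ᵀ)
    (P : ℕ) :
    frobNorm (X * W - U₁ * rectDiag N O (fun i => if i < P then s₁ i else 0) * V₁ᵀ)
      = frobNorm (X * W -
          X * M * (U₂ * rectDiag I O (fun i => if i < P then s₂ i else 0) * V₂ᵀ)) := by
  have hX : X * M * Mp = X := mul_mul_pinv_eq_self hrange.ge hMp.1 hMp.2.2.1
  have hiso := whitening_transpose_mul_self (k := Fin O) hW hrange.le hMp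
  have hXW : X * W = X * M * (Mp * W) := by rw [← Matrix.mul_assoc, hX]
  have hspec : rectDiagSq N O s₁ = (N : ℝ) • rectDiagSq I O s₂ := by
    refine eq_of_conj_diagonal_eq (rectDiagSq_antitone hs₁0 hs₁mono)
      ((rectDiagSq_antitone hs₂0 hs₂mono).const_smul (Nat.cast_nonneg (α := ℝ) N)) hV₁ hV₂ ?_
    rw [← svd_transpose_mul_self s₁ hU₁, ← hSVD₁, hXW, hiso, hSVD₂,
      svd_transpose_mul_self s₂ hU₂, diagonal_smul, Matrix.mul_smul, Matrix.smul_mul]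
  have hres : X * W - X * M * (U₂ * rectDiag I O (fun i => if i < P then s₂ i else 0) * V₂ᵀ)
      = X * M * (Mp * (W * (V₂ * diagonal (fun j : Fin O => if (j : ℕ) < P then 0 else 1) * V₂ᵀ)))
      := by
    rw [hXW, ← Matrix.mul_sub, ← Matrix.mul_assoc Mp, hSVD₂, svd_sub_truncate_eq_mul s₂ hV₂]
  have hlhs : frobSq (X * W - U₁ * rectDiag N O (fun i => if i < P then s₁ i else 0) * V₁ᵀ)
      = ∑ j : Fin O, if P ≤ (j : ℕ) then rectDiagSq N O s₁ j else 0 := by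
    rw [hSVD₁, frobSq_svd_sub_truncate s₁ hU₁ hV₁]
  have hrhs :
      frobSq (X * W - X * M * (U₂ * rectDiag I O (fun i => if i < P then s₂ i else 0) * V₂ᵀ))
      = N * ∑ j : Fin O, if P ≤ (j : ℕ) then rectDiagSq I O s₂ j else 0 := by
    rw [hres, frobSq_eq_mul_of_transpose_mul_self_eq (hiso _), ← Matrix.mul_assoc Mp, hSVD₂,
      ← svd_sub_truncate_eq_mul s₂ hV₂, frobSq_svd_sub_truncate s₂ hU₂ hV₂]
  rw [frobNorm, frobNorm, hlhs, hrhs, hspec, Finset.mul_sum]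
  simp only [Pi.smul_apply, smul_eq_mul, mul_ite, mul_zero]

theorem activation_aware_factorization_optimal {N I O R : ℕ}
    (X : Matrix (Fin N) (Fin I) ℝ) (hR : X.rank = R)
    (M Mp : Matrix (Fin I) (Fin I) ℝ)
    (hW : Mᵀ * (Xᵀ * X) * M = (N : ℝ) • Ibar I R)
    (hrange : LinearMap.range M.mulVecLin = LinearMap.range Xᵀ.mulVecLin)
    (hMp : IsMoorePenrose M Mp)
    (W : Matrix (Fin I) (Fin O) ℝ)
    -- an SVD `X * W = U₁ Σ₁ V₁ᵀ` with nonincreasing nonnegative singular values `s₁`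
    (U₁ : Matrix (Fin N) (Fin N) ℝ) (V₁ : Matrix (Fin O) (Fin O) ℝ) (s₁ : ℕ → ℝ)
    (hU₁ : U₁ᵀ * U₁ = 1) (hV₁ : V₁ᵀ * V₁ = 1)
    (hs₁0 : ∀ i, 0 ≤ s₁ i) (hs₁mono : ∀ i j : ℕ, i ≤ j → s₁ j ≤ s₁ i)
    (hSVD₁ : X * W = U₁ * rectDiag N O s₁ * V₁ᵀ)
    -- an SVD `Mp * W = U₂ Σ₂ V₂ᵀ` with nonincreasing nonnegative singular values `s₂`
    (U₂ : Matrix (Fin I) (Fin I) ℝ) (V₂ : Matrix (Fin O) (Fin O) ℝ) (s₂ : ℕ → ℝ)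
    (hU₂ : U₂ᵀ * U₂ = 1) (hV₂ : V₂ᵀ * V₂ = 1)
    (hs₂0 : ∀ i, 0 ≤ s₂ i) (hs₂mono : ∀ i j : ℕ, i ≤ j → s₂ j ≤ s₂ i)
    (hSVD₂ : Mp * W = U₂ * rectDiag I O s₂ * V₂ᵀ)
    (P : ℕ) :
    frobNorm (X * W - U₁ * rectDiag N O (fun i => if i < P then s₁ i else 0) * V₁ᵀ)
      = frobNorm (X * W -
          X * M * (U₂ * rectDiag I O (fun i => if i < P then s₂ i else 0) * V₂ᵀ)) :=
  activation_aware_factorization_optimal_general X M Mp hW hrange hMp W U₁ V₁ s₁ hU₁ hV₁ hs₁0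
    hs₁mono hSVD₁ U₂ V₂ s₂ hU₂ hV₂ hs₂0 hs₂mono hSVD₂ P
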